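/- arXiv:2109.04441 — 8 statements merged into one kernel-verified Lean document; each statement's English description precedes it below -/
import Mathlib

section
/- For irrational $a$ with $0<a<1$, the sequences $\{\lfloor (n+1/2)/a \rfloor\}_{n\in\mathbb{Z}}$ and $\{\lfloor (n+1/2)/(1-a) \rfloor\}_{n\in\mathbb{Z}}$ form a partition of $\mathbb{Z}$: every integer is of exactly one of these forms for exactly one $n$, and the two ranges are disjoint. -/
/-!
Both conditions `⌊(n + 1/2)/a⌋ = m` and `⌊(n + 1/2)/(1 - a)⌋ = m` are statements about where the
half-integers lie relative to `m a` and `(m + 1) a`. Put `k = ⌊m a + 1/2⌋`, so that `k + 1/2` is the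
first half-integer beyond `m a` (irrationality rules out equality). If `k + 1/2 < (m + 1) a`, then `m`
is hit by the first sequence at `n = k` alone; if `(m + 1) a < k + 1/2`, it is hit by the second
sequence at `n = m - k` alone. Irrationality again rules out `k + 1/2 = (m + 1) a`.
-/

theorem Irrational.intCast_mul_ne_intCast_add_half {a : ℝ} (ha : Irrational a) (m n : ℤ) :
    (m : ℝ) * a ≠ n + 1 / 2 := by
  intro h
  rcases eq_or_ne m 0 with rfl | hm
  · have : ((2 * n + 1 : ℤ) : ℝ) = 0 := by push_cast; linarith
    have : 2 * n + 1 = 0 := by exact_mod_cast this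
    omega
  · exact (ha.intCast_mul hm).ne_rat (n + 1 / 2) (by push_cast; exact h)

theorem floor_add_half_div_eq_iff {c : ℝ} (hc : 0 < c) (n m : ℤ) :
    ⌊((n : ℝ) + 1 / 2) / c⌋ = m ↔ m * c ≤ n + 1 / 2 ∧ n + 1 / 2 < (m + 1) * c := by
  rw [Int.floor_eq_iff, le_div_iff₀ hc, div_lt_iff₀ hc]

theorem floor_add_half_div_eq_iff_of_lt_one {a : ℝ} (h0 : 0 < a) (h1 : a < 1)
    (hhalf : ∀ m n : ℤ, (m : ℝ) * a ≠ n + 1 / 2) (n m : ℤ) :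
    ⌊((n : ℝ) + 1 / 2) / a⌋ = m ↔ n = ⌊m * a + 1 / 2⌋ ∧ n + 1 / 2 < (m + 1) * a := by
  rw [floor_add_half_div_eq_iff h0, eq_comm (a := n), Int.floor_eq_iff]
  have := hhalf m n
  constructor
  · rintro ⟨hlo, hhi⟩
    exact ⟨⟨by linarith, by linarith [lt_of_le_of_ne hlo this]⟩, hhi⟩
  · rintro ⟨⟨_, hlt⟩, hhi⟩
    exact ⟨by linarith, hhi⟩

theorem floor_add_half_div_one_sub_eq_iff {a : ℝ} (h0 : 0 < a) (h1 : a < 1) (n m : ℤ) :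
    ⌊((n : ℝ) + 1 / 2) / (1 - a)⌋ = m ↔
      m - n = ⌊m * a + 1 / 2⌋ ∧ (m + 1) * a < ((m - n : ℤ) : ℝ) + 1 / 2 := by
  rw [floor_add_half_div_eq_iff (sub_pos.2 h1), eq_comm (a := m - n), Int.floor_eq_iff]
  push_cast
  constructor
  · rintro ⟨hlo, hhi⟩
    exact ⟨⟨by linarith, by linarith⟩, by linarith⟩
  · rintro ⟨⟨hle, _⟩, hhi⟩
    exact ⟨by linarith, by linarith⟩

theorem beatty_fraenkel_partition (a : ℝ) (ha : Irrational a) (h0 : 0 < a) (h1 : a < 1) :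
    ∀ m : ℤ,
      ((∃! n : ℤ, ⌊((n : ℝ) + 1/2) / a⌋ = m) ∧ ¬ ∃ n : ℤ, ⌊((n : ℝ) + 1/2) / (1 - a)⌋ = m) ∨
      ((∃! n : ℤ, ⌊((n : ℝ) + 1/2) / (1 - a)⌋ = m) ∧ ¬ ∃ n : ℤ, ⌊((n : ℝ) + 1/2) / a⌋ = m) := by
  intro m
  have hhalf := ha.intCast_mul_ne_intCast_add_half
  simp only [floor_add_half_div_eq_iff_of_lt_one h0 h1 hhalf,
    floor_add_half_div_one_sub_eq_iff h0 h1]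
  set k := ⌊(m : ℝ) * a + 1 / 2⌋
  have hk : (k : ℝ) + 1 / 2 ≠ (m + 1) * a := by
    simpa [eq_comm] using hhalf (m + 1) k
  rcases hk.lt_or_gt with hlt | hgt
  · left
    refine ⟨⟨k, ⟨rfl, hlt⟩, fun n hn => hn.1⟩, ?_⟩
    rintro ⟨n, hn, hgt⟩
    rw [hn] at hgt
    linarith
  · right
    refine ⟨⟨m - k, ⟨by ring, by simpa using hgt⟩, fun n hn => by linarith [hn.1]⟩, ?_⟩
    rintro ⟨n, rfl, hlt⟩
    linarith
end

section
/- Let $f$ be a continuous function on $\mathbb{R}$ with period $1$, let $a>0$ be irrational, and let $\epsilon>0$. Then there exists $R_0$ such that for all integers $R>R_0$, all $m\in\mathbb{Z}$, and all $\alpha\in\mathbb{R}$: $\big|\frac{1}{R}\sum_{k=mR}^{(m+1)R-1} f((k+\alpha)/a) - \int_0^1 f(x)\,dx\big| < \epsilon$. -/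
/-!
Fix a rotation `x ↦ x + θ` of the circle. The continuous functions whose Birkhoff averages along it
converge to their mean uniformly in the starting point form a subspace, and it is closed because the
averaging operators are `1`-Lipschitz for the sup norm. If `θ` has infinite order, the average of a
character `fourier n`, `n ≠ 0`, is a geometric sum with ratio `fourier n θ ≠ 1`, hence `O(1/N)`
uniformly; so the subspace contains the trigonometric polynomials, which are dense. The theorem is
the case `θ = 1/a`, the block `mR, …, (m+1)R - 1` being the orbit of length `R` of `(mR + α)/a`.
-/

open Filter Topology Finset MeasureTheory AddCircle

theorem norm_geom_sum_le_of_norm_le_one {𝕜 : Type*} [NormedField 𝕜] {z : 𝕜}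
    (hz : ‖z‖ ≤ 1) (hz1 : z ≠ 1) (n : ℕ) : ‖∑ k ∈ range n, z ^ k‖ ≤ 2 / ‖z - 1‖ := by
  rw [geom_sum_eq hz1, norm_div]
  gcongr
  calc ‖z ^ n - 1‖ ≤ ‖z ^ n‖ + ‖(1 : 𝕜)‖ := norm_sub_le _ _
    _ ≤ 2 := by
      rw [norm_pow, norm_one]
      linarith [pow_le_one₀ (norm_nonneg z) hz (n := n)]

section BirkhoffAverage

variable {𝕜 α E : Type*} [RCLike 𝕜] [NormedAddCommGroup E] [NormedSpace 𝕜 E]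

theorem norm_birkhoffAverage_le {f : α → α} {g : α → E} {C : ℝ} (hg : ∀ x, ‖g x‖ ≤ C)
    (n : ℕ) (x : α) : ‖birkhoffAverage 𝕜 f g n x‖ ≤ C := by
  rcases eq_or_ne n 0 with rfl | hn
  · simpa using (norm_nonneg _).trans (hg x)
  calc ‖birkhoffAverage 𝕜 f g n x‖
      = (n : ℝ)⁻¹ * ‖∑ k ∈ range n, g (f^[k] x)‖ := by
        simp [birkhoffAverage, birkhoffSum, norm_smul]
    _ ≤ (n : ℝ)⁻¹ * (n * C) := by
        gcongr
        simpa using norm_sum_le_of_le (range n) fun k _ => hg (f^[k] x)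
    _ = C := by field_simp

theorem lipschitzWith_birkhoffAverage_apply {X : Type*} [TopologicalSpace X] [CompactSpace X]
    (f : X → X) (n : ℕ) (x : X) :
    LipschitzWith 1 fun G : C(X, E) => birkhoffAverage 𝕜 f G n x := by
  refine LipschitzWith.of_dist_le_mul fun G H => ?_
  rw [dist_eq_norm, dist_eq_norm, NNReal.coe_one, one_mul,
    ← Pi.sub_apply (birkhoffAverage 𝕜 f G n), ← Pi.sub_apply (birkhoffAverage 𝕜 f G),
    ← birkhoffAverage_sub, ← ContinuousMap.coe_sub]
  exact norm_birkhoffAverage_le (ContinuousMap.norm_coe_le_norm _) n x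

end BirkhoffAverage

section UniformErgodic

variable {X E : Type*} [TopologicalSpace X] [CompactSpace X] [MeasurableSpace X]
  [OpensMeasurableSpace X] [NormedAddCommGroup E] (μ : Measure X)

theorem ContinuousMap.integrable [IsFiniteMeasure μ] (G : C(X, E)) : Integrable G μ :=
  G.continuous.integrable_of_hasCompactSupport (HasCompactSupport.of_compactSpace _)

variable [IsProbabilityMeasure μ]

theorem lipschitzWith_integral_continuousMap [NormedSpace ℝ E] :
    LipschitzWith 1 fun G : C(X, E) => ∫ x, G x ∂μ := by
  refine LipschitzWith.of_dist_le_mul fun G H => ?_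
  rw [dist_eq_norm, dist_eq_norm, NNReal.coe_one, one_mul,
    ← integral_sub (G.integrable μ) (H.integrable μ)]
  simpa using norm_integral_le_of_norm_le_const (μ := μ)
    (Eventually.of_forall fun x => (G - H).norm_coe_le_norm x)

variable (f : X → X)

def uniformErgodicSubmodule : Submodule ℂ C(X, ℂ) where
  carrier := {G | TendstoUniformly (birkhoffAverage ℂ f G) (fun _ => ∫ x, G x ∂μ) atTop}
  zero_mem' := by
    have : birkhoffAverage ℂ f (0 : X → ℂ) = fun _ _ => 0 := by
      ext; simp [birkhoffAverage, birkhoffSum]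
    simpa [this] using (tendsto_const_nhds (x := (0 : ℂ))).tendstoUniformly_const (α := X)
  add_mem' {G H} hG hH := by
    simp only [Set.mem_ofPred_eq, ContinuousMap.coe_add, birkhoffAverage_add, Pi.add_apply,
      integral_add (G.integrable μ) (H.integrable μ)]
    exact hG.add hH
  smul_mem' c G hG := by
    have : birkhoffAverage ℂ f (c • ⇑G) = fun n x => c • birkhoffAverage ℂ f G n x := by
      ext; simp [birkhoffAverage, birkhoffSum, Finset.mul_sum, mul_left_comm]
    simp only [Set.mem_ofPred_eq, ContinuousMap.coe_smul, this, Pi.smul_apply, integral_smul]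
    exact (uniformContinuous_const_smul c).comp_tendstoUniformly hG

theorem isClosed_uniformErgodicSubmodule :
    IsClosed (uniformErgodicSubmodule μ f : Set C(X, ℂ)) := by
  have hclosed := Equicontinuous.isClosed_setOfPred_tendsto (l := atTop)
    (F := fun n (G : C(X, ℂ)) => UniformFun.ofFun (birkhoffAverage ℂ f G n))
    (f := fun G => UniformFun.ofFun fun _ : X => ∫ x, G x ∂μ)
    (LipschitzWith.uniformEquicontinuous _ 1 fun n =>
      UniformFun.lipschitzWith_ofFun_iff.2
        (lipschitzWith_birkhoffAverage_apply f n)).equicontinuous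
    (UniformFun.lipschitzWith_ofFun_iff.2 fun _ =>
      lipschitzWith_integral_continuousMap μ).continuous
  simp only [UniformFun.tendsto_iff_tendstoUniformly] at hclosed
  exact hclosed

end UniformErgodic

namespace AddCircle

variable {T : ℝ}

theorem fourier_apply_add (n : ℤ) (x y : AddCircle T) :
    fourier n (x + y) = fourier n x * fourier n y := by
  simp only [fourier_apply, smul_add, toCircle_add, Circle.coe_mul]

theorem fourier_apply_nsmul (n : ℤ) (k : ℕ) (x : AddCircle T) :
    fourier n (k • x) = fourier n x ^ k := by
  simp only [fourier_apply, smul_comm n k x, toCircle_nsmul, Circle.coe_pow]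

theorem birkhoffSum_add_right_fourier (n : ℤ) (θ : AddCircle T) (N : ℕ) (x : AddCircle T) :
    birkhoffSum (· + θ) (fourier n) N x = fourier n x * ∑ k ∈ range N, fourier n θ ^ k := by
  simp only [birkhoffSum, add_right_iterate_apply, fourier_apply_add, fourier_apply_nsmul,
    Finset.mul_sum]

theorem fourier_ne_one_of_addOrderOf_eq_zero {θ : AddCircle T} (hθ : addOrderOf θ = 0) {n : ℤ}
    (hn : n ≠ 0) (hT : T ≠ 0) : fourier n θ ≠ 1 := by
  rw [fourier_apply, ← Circle.coe_one, Ne, Circle.coe_inj, ← toCircle_zero (T := T),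
    (injective_toCircle hT).eq_iff]
  exact fun h => addOrderOf_eq_zero_iff.1 hθ (isOfFinAddOrder_iff_zsmul_eq_zero.2 ⟨n, hn, h⟩)

variable [hT : Fact (0 < T)]

theorem integral_fourier_haarAddCircle (n : ℤ) :
    ∫ x, fourier n x ∂(haarAddCircle (T := T)) = if n = 0 then 1 else 0 := by
  have h := congr_fun (fourierCoeff_fourier (T := T) n) 0
  simp only [fourierCoeff, neg_zero, fourier_zero, one_smul] at h
  rw [h, Pi.single_apply]
  simp [eq_comm]

theorem fourier_mem_uniformErgodicSubmodule {θ : AddCircle T} (hθ : addOrderOf θ = 0) (n : ℤ) :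
    fourier n ∈ uniformErgodicSubmodule haarAddCircle (· + θ) := by
  change TendstoUniformly _ _ _
  rw [integral_fourier_haarAddCircle]
  rcases eq_or_ne n 0 with rfl | hn
  · have hconst :
        birkhoffAverage ℂ (· + θ) (fourier 0 : AddCircle T → ℂ) =ᶠ[atTop] fun _ _ => 1 :=
      (eventually_ne_atTop 0).mono fun N hN => by
        rw [birkhoffAverage_of_comp_eq ℂ (by ext; simp) (Nat.cast_ne_zero.2 hN)]
        ext; exact fourier_zero
    exact (tendstoUniformly_congr hconst).2 (tendsto_const_nhds.tendstoUniformly_const)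
  set z := fourier n θ
  have hz1 : z ≠ 1 := fourier_ne_one_of_addOrderOf_eq_zero hθ hn hT.out.ne'
  rw [Metric.tendstoUniformly_iff]
  intro ε hε
  filter_upwards [(tendsto_const_div_atTop_nhds_zero_nat (2 / ‖z - 1‖)).eventually
    (gt_mem_nhds hε)] with N hN x
  rw [if_neg hn, dist_zero_left, birkhoffAverage, birkhoffSum_add_right_fourier, norm_smul,
    norm_mul]
  have hnorm : ∀ y : AddCircle T, ‖fourier n y‖ = 1 := fun _ => Circle.norm_coe _
  calc ‖((N : ℂ))⁻¹‖ * (‖fourier n x‖ * ‖∑ k ∈ range N, z ^ k‖)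
      ≤ (N : ℝ)⁻¹ * (1 * (2 / ‖z - 1‖)) := by
        rw [hnorm, norm_inv, Complex.norm_natCast]
        gcongr
        exact norm_geom_sum_le_of_norm_le_one (hnorm θ).le hz1 N
    _ < ε := by simpa [div_eq_inv_mul] using hN

theorem uniformErgodicSubmodule_eq_top {θ : AddCircle T} (hθ : addOrderOf θ = 0) :
    uniformErgodicSubmodule haarAddCircle (· + θ) = ⊤ := by
  rw [eq_top_iff, ← span_fourier_closure_eq_top]
  exact Submodule.topologicalClosure_minimal _
    (Submodule.span_le.2 (Set.range_subset_iff.2 (fourier_mem_uniformErgodicSubmodule hθ)))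
    (isClosed_uniformErgodicSubmodule _ _)

theorem tendstoUniformly_birkhoffAverage_add_right {θ : AddCircle T} (hθ : addOrderOf θ = 0)
    (G : C(AddCircle T, ℂ)) :
    TendstoUniformly (birkhoffAverage ℂ (· + θ) G) (fun _ => ∫ x, G x ∂haarAddCircle) atTop :=
  show G ∈ uniformErgodicSubmodule haarAddCircle (· + θ) from
    uniformErgodicSubmodule_eq_top hθ ▸ Submodule.mem_top

end AddCircle

namespace Function.Periodic

variable {E : Type*} [NormedAddCommGroup E] {T : ℝ} {f : ℝ → E}

theorem birkhoffAverage_add_right_lift (hper : Periodic f T) (𝕜 : Type*)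
    [DivisionSemiring 𝕜] [Module 𝕜 E] (θ x : ℝ) (N : ℕ) :
    birkhoffAverage 𝕜 (· + (θ : AddCircle T)) hper.lift N x =
      (N : 𝕜)⁻¹ • ∑ k ∈ range N, f (x + k * θ) := by
  simp only [birkhoffAverage, birkhoffSum, add_right_iterate_apply, ← AddCircle.coe_nsmul,
    ← AddCircle.coe_add, hper.lift_coe, nsmul_eq_mul]

theorem integral_haarAddCircle_lift (hper : Periodic f T) [NormedSpace ℝ E] [Fact (0 < T)] :
    ∫ x, hper.lift x ∂haarAddCircle = T⁻¹ • ∫ x in (0 : ℝ)..T, f x := by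
  have h := AddCircle.intervalIntegral_preimage T 0 hper.lift
  simp only [zero_add, hper.lift_coe] at h
  rw [integral_haarAddCircle, h]

end Function.Periodic

theorem uniform_weyl_khinchin_general (f : ℝ → ℂ) (hf : Continuous f)
    (hper : Function.Periodic f 1) (a : ℝ) (ha : Irrational a) :
    ∀ ε > (0 : ℝ), ∃ R₀ : ℕ, ∀ R : ℕ, R₀ < R → ∀ m : ℤ, ∀ α : ℝ,
      ‖(1 / (R : ℂ)) *
          ∑ j ∈ Finset.range R, f ((((m * R + j : ℤ) : ℝ) + α) / a)
        - ∫ x in (0 : ℝ)..1, f x‖ < ε := by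
  intro ε hε
  have hθ : addOrderOf ((a⁻¹ : ℝ) : UnitAddCircle) = 0 :=
    denseRange_zsmul_iff.1 (denseRange_zsmul_coe_iff.2 (by simpa using ha.inv))
  let F : C(UnitAddCircle, ℂ) := ⟨hper.lift, continuous_coinduced_dom.2 hf⟩
  obtain ⟨R₀, hR₀⟩ := eventually_atTop.1 <| Metric.tendstoUniformly_iff.1
    (tendstoUniformly_birkhoffAverage_add_right hθ F) ε hε
  refine ⟨R₀, fun R hR m α => ?_⟩
  have h := hR₀ R hR.le (((m * R + α) / a : ℝ) : UnitAddCircle)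
  rw [dist_comm, dist_eq_norm, ContinuousMap.coe_mk, hper.birkhoffAverage_add_right_lift,
    hper.integral_haarAddCircle_lift, inv_one, one_smul, smul_eq_mul] at h
  have hblock : ∑ j ∈ range R, f ((((m * R + j : ℤ) : ℝ) + α) / a) =
      ∑ j ∈ range R, f ((m * R + α) / a + j * a⁻¹) :=
    sum_congr rfl fun j _ => congr_arg f (by push_cast; ring)
  rwa [one_div, hblock]

theorem uniform_weyl_khinchin (f : ℝ → ℂ) (hf : Continuous f)
    (hper : Function.Periodic f 1) (a : ℝ) (ha : Irrational a) (hapos : 0 < a) :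
    ∀ ε > (0 : ℝ), ∃ R₀ : ℕ, ∀ R : ℕ, R₀ < R → ∀ m : ℤ, ∀ α : ℝ,
      ‖(1 / (R : ℂ)) *
          ∑ j ∈ Finset.range R, f ((((m * R + j : ℤ) : ℝ) + α) / a)
        - ∫ x in (0 : ℝ)..1, f x‖ < ε :=
  uniform_weyl_khinchin_general f hf hper a ha
end

section
/- For $a$ irrational with $0<a<1$ and any $\epsilon>0$ there exists $R_0$ such that for all integers $R>R_0$ and all $m\in\mathbb{Z}$: $\big|\frac{1}{R}\sum_{k=mR}^{(m+1)R-1} \big((k+1/2)/a - \lfloor (k+1/2)/a\rfloor\big) - 1/2\big| < \epsilon$. -/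
open Finset


lemma sum_range_real (n : ℕ) : ∑ j ∈ range n, (j:ℝ) = n * (n - 1) / 2 := by
  induction n with
  | zero => simp
  | succ k ih => rw [Finset.sum_range_succ, ih]; push_cast; ring

-- exact grid sum: ∑_{j<q} fract(θ + j/q) = fract(qθ) + (q-1)/2
lemma grid_sum (q : ℕ) (hq : 0 < q) (θ : ℝ) :
    ∑ j ∈ range q, Int.fract (θ + j / q) = Int.fract (q * θ) + (q - 1) / 2 := by
  have hq' : (0:ℝ) < q := by positivity
  set c : ℝ := Int.fract θ with hc
  have hc0 : 0 ≤ c := Int.fract_nonneg θ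
  have hc1 : c < 1 := Int.fract_lt_one θ
  have h1 : ∀ j : ℕ, Int.fract (θ + j / q) = Int.fract (c + j / q) := by
    intro j
    have : θ + (j:ℝ)/q = (⌊θ⌋ : ℝ) + (c + j/q) := by
      rw [hc]; unfold Int.fract; ring
    rw [this, Int.fract_intCast_add]
  have h2 : Int.fract ((q:ℝ) * θ) = Int.fract ((q:ℝ) * c) := by
    have : (q:ℝ) * θ = ((q * ⌊θ⌋ : ℤ) : ℝ) + (q:ℝ) * c := by
      push_cast; rw [hc]; unfold Int.fract; ring
    rw [this, Int.fract_intCast_add]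
  simp only [h1, h2]
  set t : ℤ := ⌊(q:ℝ) * c⌋ with ht
  have ht0 : 0 ≤ t := Int.floor_nonneg.2 (by positivity)
  have htq : t < q := by
    have : (q:ℝ) * c < q := by nlinarith
    exact Int.floor_lt.2 (by exact_mod_cast this)
  have h3 : ∀ j ∈ range q, Int.fract (c + j / q) =
      (c + j / q) - (if (q:ℤ) - j ≤ t then (1:ℝ) else 0) := by
    intro j hj
    have hjq : j < q := mem_range.1 hj
    have hjq' : (j:ℝ) < q := by exact_mod_cast hjq
    have hjj : (j:ℝ)/q * q = j := div_mul_cancel₀ _ hq'.ne'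
    have hj0 : (0:ℝ) ≤ (j:ℝ)/q := by positivity
    have hx0 : 0 ≤ c + j / q := by positivity
    have hx2 : c + j / q < 2 := by
      have : (j:ℝ)/q < 1 := (div_lt_one hq').2 hjq'
      linarith
    have hcond : ((q:ℤ) - j ≤ t) ↔ (1 ≤ c + j / q) := by
      rw [ht, Int.le_floor]
      push_cast
      constructor <;> intro h <;> nlinarith
    by_cases h : (1:ℝ) ≤ c + j / q
    · rw [if_pos (hcond.2 h)]
      unfold Int.fract
      have hfl : ⌊c + j / q⌋ = 1 := by
        rw [Int.floor_eq_iff]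
        push_cast
        exact ⟨h, by linarith⟩
      rw [hfl]; push_cast; ring
    · rw [if_neg (fun hh => h (hcond.1 hh))]
      unfold Int.fract
      have hfl : ⌊c + j / q⌋ = 0 := by
        rw [Int.floor_eq_iff]
        push_cast
        exact ⟨hx0, by linarith [lt_of_not_ge h]⟩
      rw [hfl]; push_cast; ring
  rw [Finset.sum_congr rfl h3, Finset.sum_sub_distrib]
  have hcount : ∑ j ∈ range q, (if (q:ℤ) - j ≤ t then (1:ℝ) else 0) = (t : ℝ) := by
    rw [← Finset.sum_filter]
    have hfil : (range q).filter (fun j : ℕ => (q:ℤ) - (j:ℤ) ≤ t) = Finset.Ico (q - t.toNat) q := by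
      ext j
      simp only [mem_filter, mem_range, Finset.mem_Ico]
      omega
    rw [hfil]
    simp only [Finset.sum_const, Nat.card_Ico, nsmul_eq_mul, mul_one]
    have h5 : q - (q - t.toNat) = t.toNat := by omega
    rw [h5]
    exact_mod_cast congrArg (fun z : ℤ => (z:ℝ)) (Int.toNat_of_nonneg ht0)
  rw [hcount]
  have hgauss : ∑ j ∈ range q, (c + (j:ℝ) / q) = q * c + (q - 1) / 2 := by
    rw [Finset.sum_add_distrib, Finset.sum_const, ← Finset.sum_div, sum_range_real]
    rw [card_range, nsmul_eq_mul]
    field_simp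
  rw [hgauss]
  have hfr : Int.fract ((q:ℝ) * c) = (q:ℝ) * c - t := rfl
  rw [hfr]; ring


-- fract(θ + n/q) depends only on n mod q
lemma fract_shift_int (q : ℕ) (hq : 0 < q) (θ : ℝ) (n : ℤ) :
    Int.fract (θ + (n:ℝ) / q) = Int.fract (θ + ((n % q : ℤ) : ℝ) / q) := by
  have hq' : (0:ℝ) < q := by positivity
  have hsplit : θ + (n:ℝ)/q = ((n / q : ℤ) : ℝ) + (θ + ((n % q : ℤ) : ℝ) / q) := by
    have h : n = (q:ℤ) * (n / (q:ℤ)) + n % (q:ℤ) := (Int.mul_ediv_add_emod n q).symm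
    have hn : (n:ℝ) = (q:ℝ) * ((n / (q:ℤ) : ℤ):ℝ) + ((n % (q:ℤ) : ℤ):ℝ) := by
      exact_mod_cast congrArg (fun z : ℤ => (z:ℝ)) h
    rw [hn]
    field_simp
    ring
  rw [hsplit, Int.fract_intCast_add]

lemma coprime_sum (q : ℕ) (hq : 0 < q) (p : ℤ) (hcop : p.natAbs.Coprime q) (θ : ℝ) :
    ∑ k ∈ range q, Int.fract (θ + k * ((p:ℝ) / q)) = ∑ j ∈ range q, Int.fract (θ + (j:ℝ) / q) := by
  haveI : NeZero q := ⟨hq.ne'⟩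
  have hq' : (0:ℝ) < q := by positivity
  set F : ZMod q → ℝ := fun z => Int.fract (θ + (z.val : ℝ) / q) with hF
  have key : ∀ n : ℤ, Int.fract (θ + (n:ℝ) / q) = F ((n : ZMod q)) := by
    intro n
    rw [fract_shift_int q hq θ n, hF]
    have hv : (((n : ZMod q)).val : ℝ) = ((n % (q:ℤ) : ℤ) : ℝ) := by
      exact_mod_cast congrArg (fun z : ℤ => (z:ℝ)) (ZMod.val_intCast (n := q) n)
    show Int.fract (θ + ((n % (q:ℤ) : ℤ):ℝ)/q) = Int.fract (θ + (((n : ZMod q)).val : ℝ)/q)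
    rw [hv]
  have hunit : IsUnit ((p : ℤ) : ZMod q) := by
    rcases Int.natAbs_eq p with h | h
    · rw [h, Int.cast_natCast]
      exact (ZMod.coe_unitOfCoprime p.natAbs hcop) ▸ (ZMod.unitOfCoprime p.natAbs hcop).isUnit
    · rw [h, Int.cast_neg, Int.cast_natCast]
      exact ((ZMod.coe_unitOfCoprime p.natAbs hcop) ▸ (ZMod.unitOfCoprime p.natAbs hcop).isUnit).neg
  have hL : ∀ k : ℕ, Int.fract (θ + k * ((p:ℝ) / q)) = F ((k : ZMod q) * (p : ZMod q)) := by
    intro k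
    have h1 : θ + (k:ℝ) * ((p:ℝ)/q) = θ + (((k : ℤ) * p : ℤ) : ℝ) / q := by
      push_cast; ring
    rw [h1, key ((k:ℤ) * p)]
    push_cast
    ring_nf
  have hR : ∀ j : ℕ, Int.fract (θ + (j:ℝ) / q) = F ((j : ZMod q)) := by
    intro j
    have h1 : θ + (j:ℝ)/q = θ + (((j:ℤ)):ℝ)/q := by push_cast; ring
    rw [h1, key (j:ℤ)]
    push_cast
    ring_nf
  simp only [hL, hR]
  have hsum : ∀ G : ZMod q → ℝ, ∑ k ∈ range q, G (k : ZMod q) = ∑ z : ZMod q, G z := by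
    intro G
    apply Finset.sum_nbij' (fun k : ℕ => (k : ZMod q)) (fun z : ZMod q => z.val)
    · intro k _; exact Finset.mem_univ _
    · intro z _; exact mem_range.2 (ZMod.val_lt z)
    · intro k hk; exact ZMod.val_natCast_of_lt (mem_range.1 hk)
    · intro z _; exact ZMod.natCast_rightInverse z
    · intro k _; rfl
  calc ∑ x ∈ range q, F ((x : ZMod q) * (p : ZMod q))
      = ∑ z : ZMod q, F (z * (p : ZMod q)) := hsum (fun z => F (z * (p : ZMod q)))
    _ = ∑ z : ZMod q, F z := Fintype.sum_bijective (· * ((p : ZMod q)))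
        (IsUnit.isUnit_iff_mulRight_bijective.1 hunit) _ _ (fun z => rfl)
    _ = ∑ j ∈ range q, F ((j : ZMod q)) := (hsum F).symm

lemma near_boundary {x y d : ℝ} (hd : |x - y| < d) (hne : ⌊x⌋ ≠ ⌊y⌋) :
    Int.fract y < d ∨ 1 - d < Int.fract y := by
  rw [abs_lt] at hd
  have hfy : Int.fract y = y - ⌊y⌋ := rfl
  rcases lt_or_gt_of_ne hne with h | h
  · left
    have h1 : (⌊x⌋:ℝ) + 1 ≤ (⌊y⌋:ℝ) := by exact_mod_cast h
    have h2 : x < (⌊x⌋:ℝ) + 1 := Int.lt_floor_add_one x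
    rw [hfy]; linarith [hd.1]
  · right
    have h1 : (⌊y⌋:ℝ) + 1 ≤ (⌊x⌋:ℝ) := by exact_mod_cast h
    have h2 : (⌊x⌋:ℝ) ≤ x := Int.floor_le x
    rw [hfy]; linarith [hd.2]

lemma block_bound (α : ℝ) (q : ℕ) (hq2 : 2 ≤ q) (p : ℤ) (hcop : p.natAbs.Coprime q)
    (happ : |α - p / q| < 1 / (q:ℝ)^2) (θ : ℝ) :
    |(∑ k ∈ range q, Int.fract (θ + k * α)) - q / 2| ≤ 3 := by
  have hq : 0 < q := by omega
  have hq' : (0:ℝ) < q := by positivity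
  set β : ℝ := (p:ℝ) / q with hβ
  -- distance between perturbed and grid points
  have hdist : ∀ k ∈ range q, |(θ + k * α) - (θ + k * β)| < 1 / q := by
    intro k hk
    have hkq : (k:ℝ) < q := by exact_mod_cast mem_range.1 hk
    have : (θ + k * α) - (θ + k * β) = k * (α - β) := by ring
    rw [this, abs_mul, abs_of_nonneg (by positivity : (0:ℝ) ≤ (k:ℝ))]
    calc (k:ℝ) * |α - β| ≤ q * |α - β| := by
          apply mul_le_mul_of_nonneg_right (le_of_lt hkq) (abs_nonneg _)
      _ < q * (1 / q^2) := by
          apply mul_lt_mul_of_pos_left happ hq'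
      _ = 1 / q := by field_simp
  -- badness implies fract of grid point near boundary
  have hbadloc : ∀ k ∈ range q, ⌊θ + k * α⌋ ≠ ⌊θ + k * β⌋ →
      Int.fract (θ + k * β) < 1/q ∨ 1 - 1/q < Int.fract (θ + k * β) :=
    fun k hk hne => near_boundary (hdist k hk) hne
  -- any two grid points with fract within 1/q are equal
  have hsep : ∀ k ∈ range q, ∀ k' ∈ range q,
      |Int.fract (θ + k * β) - Int.fract (θ + k' * β)| < 1/q → k = k' := by
    intro k hk k' hk' hlt
    have hk1 : k < q := mem_range.1 hk
    have hk2 : k' < q := mem_range.1 hk'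
    set n : ℤ := ⌊θ + k * β⌋ - ⌊θ + k' * β⌋ with hn
    set M : ℤ := ((k:ℤ) - k') * p - q * n with hM
    have hMr : (M:ℝ) = q * (Int.fract (θ + k * β) - Int.fract (θ + k' * β)) := by
      rw [hM, hn]
      push_cast
      unfold Int.fract
      rw [hβ]
      field_simp
      ring
    have hM0 : M = 0 := by
      have habs : |(M:ℝ)| < 1 := by
        rw [hMr, abs_mul, abs_of_pos hq']
        calc (q:ℝ) * |_| < q * (1/q) := mul_lt_mul_of_pos_left hlt hq'
          _ = 1 := by field_simp
      rw [abs_lt] at habs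
      have hl : (-1:ℝ) < (M:ℝ) := habs.1
      have hr : (M:ℝ) < 1 := habs.2
      have hl' : (-1:ℤ) < M := by exact_mod_cast hl
      have hr' : M < (1:ℤ) := by exact_mod_cast hr
      omega
    have hdvd : (q:ℤ) ∣ ((k:ℤ) - k') * p := ⟨n, by omega⟩
    have hcop' : IsCoprime ((q:ℕ):ℤ) p := by
      rw [Int.isCoprime_iff_gcd_eq_one, Int.gcd]
      simpa [Nat.coprime_comm] using hcop
    obtain ⟨c, hc⟩ := hcop'.dvd_of_dvd_mul_right hdvd
    have hq0 : (0:ℤ) < q := by exact_mod_cast hq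
    have h1 : (q:ℤ) * c < q * 1 := by rw [mul_one, ← hc]; omega
    have h2 : (q:ℤ) * (-1) < q * c := by rw [← hc]; omega
    have hc1 : c < 1 := lt_of_mul_lt_mul_left h1 (le_of_lt hq0)
    have hc2 : (-1:ℤ) < c := lt_of_mul_lt_mul_left h2 (le_of_lt hq0)
    have : c = 0 := by omega
    rw [this, mul_zero] at hc
    omega
  -- the bad set has at most 2 elements
  set B : Finset ℕ := (range q).filter (fun k => ⌊θ + k * α⌋ ≠ ⌊θ + k * β⌋) with hB
  have hcard : B.card ≤ 2 := by
    set B1 : Finset ℕ := (range q).filter (fun k => Int.fract (θ + k * β) < 1/q) with hB1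
    set B2 : Finset ℕ := (range q).filter (fun k => 1 - 1/q < Int.fract (θ + k * β)) with hB2
    have hsub : B ⊆ B1 ∪ B2 := by
      intro k hk
      rw [hB, mem_filter] at hk
      rcases hbadloc k hk.1 hk.2 with h | h
      · exact Finset.mem_union_left _ (mem_filter.2 ⟨hk.1, h⟩)
      · exact Finset.mem_union_right _ (mem_filter.2 ⟨hk.1, h⟩)
    have hc1 : B1.card ≤ 1 := by
      rw [Finset.card_le_one]
      intro a ha b hb
      rw [hB1, mem_filter] at ha hb
      apply hsep a ha.1 b hb.1
      rw [abs_lt]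
      constructor
      · linarith [Int.fract_nonneg (θ + a * β), ha.2, hb.2]
      · linarith [Int.fract_nonneg (θ + b * β), ha.2, hb.2]
    have hc2 : B2.card ≤ 1 := by
      rw [Finset.card_le_one]
      intro a ha b hb
      rw [hB2, mem_filter] at ha hb
      apply hsep a ha.1 b hb.1
      rw [abs_lt]
      constructor
      · linarith [Int.fract_lt_one (θ + a * β), Int.fract_lt_one (θ + b * β), ha.2, hb.2]
      · linarith [Int.fract_lt_one (θ + a * β), Int.fract_lt_one (θ + b * β), ha.2, hb.2]
    calc B.card ≤ (B1 ∪ B2).card := Finset.card_le_card hsub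
      _ ≤ B1.card + B2.card := Finset.card_union_le _ _
      _ ≤ 2 := by omega
  -- per-term bound
  have hterm : ∀ k ∈ range q, |Int.fract (θ + k * α) - Int.fract (θ + k * β)| ≤
      (k:ℝ) * |α - β| + (if ⌊θ + k * α⌋ ≠ ⌊θ + k * β⌋ then (1:ℝ) else 0) := by
    intro k hk
    by_cases heq : ⌊θ + k * α⌋ = ⌊θ + k * β⌋
    · rw [if_neg (by simpa using heq), add_zero]
      have : Int.fract (θ + k * α) - Int.fract (θ + k * β)
          = (θ + k * α) - (θ + k * β) := by
        unfold Int.fract; rw [heq]; ring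
      rw [this]
      have h2 : (θ + k * α) - (θ + k * β) = k * (α - β) := by ring
      rw [h2, abs_mul, abs_of_nonneg (by positivity : (0:ℝ) ≤ (k:ℝ))]
    · rw [if_pos heq]
      have h1 : |Int.fract (θ + k * α) - Int.fract (θ + k * β)| < 1 := by
        rw [abs_lt]
        constructor
        · linarith [Int.fract_nonneg (θ + k * α), Int.fract_lt_one (θ + k * β)]
        · linarith [Int.fract_lt_one (θ + k * α), Int.fract_nonneg (θ + k * β)]
      have h2 : (0:ℝ) ≤ (k:ℝ) * |α - β| := by positivity
      linarith
  -- sum of differences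
  have hdiff : |(∑ k ∈ range q, Int.fract (θ + k * α)) - ∑ k ∈ range q, Int.fract (θ + k * β)|
      ≤ 5/2 := by
    rw [← Finset.sum_sub_distrib]
    calc |∑ k ∈ range q, (Int.fract (θ + k * α) - Int.fract (θ + k * β))|
        ≤ ∑ k ∈ range q, |Int.fract (θ + k * α) - Int.fract (θ + k * β)| :=
          Finset.abs_sum_le_sum_abs _ _
      _ ≤ ∑ k ∈ range q, ((k:ℝ) * |α - β|
            + (if ⌊θ + k * α⌋ ≠ ⌊θ + k * β⌋ then (1:ℝ) else 0)) :=
          Finset.sum_le_sum hterm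
      _ = (∑ k ∈ range q, (k:ℝ)) * |α - β| + (B.card : ℝ) := by
          rw [Finset.sum_add_distrib, ← Finset.sum_mul]
          congr 1
          rw [← Finset.sum_filter, ← hB, Finset.sum_const, nsmul_eq_mul, mul_one]
      _ ≤ 1/2 + 2 := by
          have hg : (∑ k ∈ range q, (k:ℝ)) = q * (q - 1) / 2 := sum_range_real q
          have hb : (B.card : ℝ) ≤ 2 := by exact_mod_cast hcard
          have h2 : (q:ℝ) * (q - 1) / 2 * |α - β| ≤ 1/2 := by
            have hq1 : (1:ℝ) ≤ (q:ℝ) := by exact_mod_cast hq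
            have h3 : (0:ℝ) ≤ (q:ℝ) * (q - 1) / 2 := by nlinarith
            have h4 : |α - β| ≤ 1 / q^2 := le_of_lt happ
            have := mul_le_mul_of_nonneg_left h4 h3
            calc (q:ℝ) * (q - 1) / 2 * |α - β| ≤ (q:ℝ) * (q - 1) / 2 * (1/q^2) := this
              _ ≤ 1/2 := by
                  rw [div_mul_div_comm, div_le_div_iff₀ (by positivity) (by norm_num)]
                  nlinarith
          rw [hg]
          linarith
      _ = 5/2 := by norm_num
  -- grid sum value
  have hgrid : (∑ k ∈ range q, Int.fract (θ + k * β)) = Int.fract (q * θ) + ((q:ℝ) - 1) / 2 := by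
    rw [hβ]
    rw [coprime_sum q hq p hcop θ]
    exact grid_sum q hq θ
  have hy : |(∑ k ∈ range q, Int.fract (θ + k * β)) - (q:ℝ)/2| ≤ 1/2 := by
    rw [hgrid]
    have h1 := Int.fract_nonneg ((q:ℝ) * θ)
    have h2 := Int.fract_lt_one ((q:ℝ) * θ)
    rw [abs_le]
    constructor <;> linarith
  calc |(∑ k ∈ range q, Int.fract (θ + k * α)) - (q:ℝ)/2|
      ≤ |(∑ k ∈ range q, Int.fract (θ + k * α)) - ∑ k ∈ range q, Int.fract (θ + k * β)|
        + |(∑ k ∈ range q, Int.fract (θ + k * β)) - (q:ℝ)/2| := abs_sub_le _ _ _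
    _ ≤ 5/2 + 1/2 := add_le_add hdiff hy
    _ = 3 := by norm_num


lemma blocks_bound (α : ℝ) (q : ℕ) (hq2 : 2 ≤ q) (p : ℤ) (hcop : p.natAbs.Coprime q)
    (happ : |α - p / q| < 1 / (q:ℝ)^2) (N : ℕ) (θ : ℝ) :
    |(∑ k ∈ range (N * q), Int.fract (θ + k * α)) - ((N * q : ℕ) : ℝ) / 2| ≤ 3 * N := by
  induction N with
  | zero => simp
  | succ N ih =>
    have hco : (N + 1) * q = N * q + q := by ring
    rw [hco, Finset.sum_range_add]
    have hblock : ∀ i ∈ range q, Int.fract (θ + (↑(N * q + i)) * α)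
        = Int.fract ((θ + ((N * q : ℕ) : ℝ) * α) + i * α) := by
      intro i _
      congr 1
      push_cast
      ring
    rw [Finset.sum_congr rfl hblock]
    have hb := block_bound α q hq2 p hcop happ (θ + ((N * q : ℕ) : ℝ) * α)
    have hcast : ((N * q + q : ℕ) : ℝ) = ((N * q : ℕ) : ℝ) + (q : ℝ) := by push_cast; ring
    rw [hcast]
    have habs := abs_add_le ((∑ k ∈ range (N * q), Int.fract (θ + k * α)) - ((N * q : ℕ) : ℝ) / 2)
      ((∑ i ∈ range q, Int.fract ((θ + ((N * q : ℕ) : ℝ) * α) + i * α)) - (q : ℝ) / 2)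
    have heq : (∑ k ∈ range (N * q), Int.fract (θ + k * α))
        + (∑ i ∈ range q, Int.fract ((θ + ((N * q : ℕ) : ℝ) * α) + i * α))
        - (((N * q : ℕ) : ℝ) + (q : ℝ)) / 2
        = ((∑ k ∈ range (N * q), Int.fract (θ + k * α)) - ((N * q : ℕ) : ℝ) / 2)
        + ((∑ i ∈ range q, Int.fract ((θ + ((N * q : ℕ) : ℝ) * α) + i * α)) - (q : ℝ) / 2) := by
      ring
    rw [heq]
    calc _ ≤ _ := habs
      _ ≤ 3 * N + 3 := add_le_add ih hb
      _ = 3 * (N + 1) := by ring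
      _ = 3 * ((N : ℝ) + 1) := by norm_num
      _ = 3 * ((N + 1 : ℕ) : ℝ) := by push_cast; ring

lemma exists_approx (α : ℝ) (hα : Irrational α) (M : ℕ) :
    ∃ r : ℚ, M < r.den ∧ |α - (r : ℝ)| < 1 / (r.den : ℝ)^2 := by
  have hinf := Real.infinite_rat_abs_sub_lt_one_div_den_sq_of_irrational hα
  set T : Set ℚ := {r : ℚ | r.den ≤ M ∧ |α - (r : ℝ)| < 1} with hT
  have hTfin : T.Finite := by
    set B : ℤ := ⌈(|α| + 1) * M⌉ with hBdef
    apply Set.Finite.subset (Set.Finite.image (fun pr : ℤ × ℕ => (pr.1 : ℚ) / (pr.2 : ℚ))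
      ((Set.finite_Icc (-B) B).prod (Set.finite_Icc 0 M)))
    intro r hr
    rw [hT] at hr
    refine ⟨(r.num, r.den), ?_, ?_⟩
    · constructor
      · -- |r.num| ≤ B
        have hden1 : (1:ℝ) ≤ (r.den : ℝ) := by exact_mod_cast r.pos
        have habs : |(r:ℝ)| ≤ |α| + 1 := by
          have h1 := abs_sub_abs_le_abs_sub (r:ℝ) α
          rw [abs_sub_comm] at h1
          linarith [le_of_lt hr.2]
        have hnum : |(r.num : ℝ)| ≤ (|α| + 1) * M := by
          have h2 : (r.num : ℝ) = (r:ℝ) * r.den := by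
            rw [Rat.cast_def]
            field_simp
          rw [h2, abs_mul, abs_of_nonneg (by positivity : (0:ℝ) ≤ (r.den:ℝ))]
          have h3 : (r.den : ℝ) ≤ M := by exact_mod_cast hr.1
          have h4 : (0:ℝ) ≤ |α| + 1 := by positivity
          calc |(r:ℝ)| * r.den ≤ (|α| + 1) * r.den :=
                mul_le_mul_of_nonneg_right habs (by positivity)
            _ ≤ (|α| + 1) * M := mul_le_mul_of_nonneg_left h3 h4
        have hBle : |r.num| ≤ B := by
          have h5 : ((|r.num| : ℤ) : ℝ) ≤ (B : ℤ) := by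
            rw [Int.cast_abs]
            calc |(r.num : ℝ)| ≤ (|α| + 1) * M := hnum
              _ ≤ (B : ℝ) := Int.le_ceil _
          exact_mod_cast h5
        rw [Set.mem_Icc]
        constructor <;> [linarith [abs_le.1 hBle]; linarith [(abs_le.1 hBle).2]]
      · rw [Set.mem_Icc]
        exact ⟨Nat.zero_le _, hr.1⟩
    · show ((r.num : ℚ) / (r.den : ℚ)) = r
      exact Rat.num_div_den r
  have hSdiff : ({q : ℚ | |α - q| < 1 / (q.den : ℝ)^2} \ T).Infinite := hinf.diff hTfin
  obtain ⟨r, hrS, hrT⟩ := hSdiff.nonempty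
  refine ⟨r, ?_, hrS⟩
  by_contra hle
  push_neg at hle
  apply hrT
  rw [hT]
  refine ⟨hle, lt_of_lt_of_le hrS ?_⟩
  have hden1 : (1:ℝ) ≤ (r.den : ℝ) := by exact_mod_cast r.pos
  rw [div_le_one (by positivity)]
  nlinarith

set_option maxHeartbeats 1000000 in
theorem uniform_fract_average (a : ℝ) (ha : Irrational a) (h0 : 0 < a) (h1 : a < 1) :
    ∀ ε > (0 : ℝ), ∃ R₀ : ℕ, ∀ R : ℕ, R₀ < R → ∀ m : ℤ,
      |(1 / (R : ℝ)) *
          (∑ j ∈ Finset.range R,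
            ((((m * R + j : ℤ) : ℝ) + 1/2) / a - ⌊(((m * R + j : ℤ) : ℝ) + 1/2) / a⌋))
        - 1/2| < ε := by
  intro ε hε
  set α : ℝ := a⁻¹ with hα
  have hαirr : Irrational α := ha.inv
  have ha0 : a ≠ 0 := ne_of_gt h0
  -- pick a good rational approximation with large denominator
  obtain ⟨r, hrden, hrapp⟩ := exists_approx α hαirr (Nat.ceil (6/ε) + 1)
  set q : ℕ := r.den with hqdef
  set p : ℤ := r.num with hpdef
  have hq2 : 2 ≤ q := by
    have := Nat.le_ceil (6/ε)
    omega
  have hq' : (0:ℝ) < q := by positivity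
  have hqbig : 6 / ε < (q:ℝ) := by
    have h2 : ((Nat.ceil (6/ε) : ℕ) : ℝ) ≥ 6/ε := Nat.le_ceil _
    have h3 : (Nat.ceil (6/ε) + 1 : ℕ) < q := hrden
    have h4 : ((Nat.ceil (6/ε) + 1 : ℕ) : ℝ) < (q:ℝ) := by exact_mod_cast h3
    push_cast at h4
    linarith
  have hcop : p.natAbs.Coprime q := r.reduced
  have happ : |α - (p:ℝ) / q| < 1 / (q:ℝ)^2 := by
    have : ((r:ℝ)) = (p:ℝ) / q := by rw [Rat.cast_def]
    rwa [this] at hrapp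
  -- choose R₀
  refine ⟨Nat.ceil ((q:ℝ) / ε), fun R hR m => ?_⟩
  have hR1 : 0 < R := by omega
  have hR' : (0:ℝ) < R := by exact_mod_cast hR1
  have hRbig : (q:ℝ) / ε < R := by
    have h2 : ((Nat.ceil ((q:ℝ)/ε) : ℕ) : ℝ) ≥ (q:ℝ)/ε := Nat.le_ceil _
    have h4 : ((Nat.ceil ((q:ℝ)/ε) : ℕ) : ℝ) < (R:ℝ) := by exact_mod_cast hR
    linarith
  set θ : ℝ := ((m:ℝ) * R + 1/2) * α with hθ
  -- rewrite summands as Int.fract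
  have hsummand : ∀ j ∈ range R, (((m * R + j : ℤ) : ℝ) + 1/2) / a
      - (⌊(((m * R + j : ℤ) : ℝ) + 1/2) / a⌋ : ℤ) = Int.fract (θ + j * α) := by
    intro j _
    have hxeq : (((m * R + j : ℤ) : ℝ) + 1/2) / a = θ + j * α := by
      rw [hθ, hα]
      push_cast
      rw [div_eq_mul_inv]
      ring
    rw [hxeq]
    rfl
  rw [Finset.sum_congr rfl hsummand]
  -- split into blocks
  set N : ℕ := R / q with hN
  set s : ℕ := R % q with hs
  have hRsplit : N * q + s = R := by rw [hN, hs]; rw [Nat.mul_comm]; exact Nat.div_add_mod R q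
  have hslt : s < q := Nat.mod_lt _ (by omega)
  have hsum_split : ∑ j ∈ range R, Int.fract (θ + j * α)
      = (∑ k ∈ range (N * q), Int.fract (θ + k * α))
        + ∑ i ∈ range s, Int.fract (θ + (↑(N * q + i)) * α) := by
    rw [← hRsplit, Finset.sum_range_add]
  have hblocks := blocks_bound α q hq2 p hcop happ N θ
  -- tail bound
  have htail : |(∑ i ∈ range s, Int.fract (θ + (↑(N * q + i)) * α)) - (s:ℝ)/2| ≤ (s:ℝ)/2 := by
    have h0' : 0 ≤ ∑ i ∈ range s, Int.fract (θ + (↑(N * q + i)) * α) :=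
      Finset.sum_nonneg (fun i _ => Int.fract_nonneg _)
    have h1' : (∑ i ∈ range s, Int.fract (θ + (↑(N * q + i)) * α)) ≤ (s:ℝ) := by
      calc (∑ i ∈ range s, Int.fract (θ + (↑(N * q + i)) * α))
          ≤ ∑ i ∈ range s, (1:ℝ) :=
            Finset.sum_le_sum (fun i _ => le_of_lt (Int.fract_lt_one _))
        _ = (s:ℝ) := by rw [Finset.sum_const, card_range, nsmul_eq_mul, mul_one]
    rw [abs_le]
    constructor <;> linarith
  -- total bound
  have htot : |(∑ j ∈ range R, Int.fract (θ + j * α)) - (R:ℝ)/2| ≤ 3 * N + (q:ℝ)/2 := by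
    rw [hsum_split]
    have hcast : (R:ℝ) = ((N * q : ℕ) : ℝ) + (s:ℝ) := by
      rw [← hRsplit]; push_cast; ring
    rw [hcast]
    have heq : (∑ k ∈ range (N * q), Int.fract (θ + k * α))
        + (∑ i ∈ range s, Int.fract (θ + (↑(N * q + i)) * α))
        - (((N * q : ℕ) : ℝ) + (s:ℝ)) / 2
        = ((∑ k ∈ range (N * q), Int.fract (θ + k * α)) - ((N * q : ℕ) : ℝ)/2)
        + ((∑ i ∈ range s, Int.fract (θ + (↑(N * q + i)) * α)) - (s:ℝ)/2) := by ring
    rw [heq]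
    have hsq : (s:ℝ)/2 ≤ (q:ℝ)/2 := by
      have : (s:ℝ) ≤ (q:ℝ) := by exact_mod_cast le_of_lt hslt
      linarith
    calc _ ≤ _ := abs_add_le _ _
      _ ≤ 3 * N + (q:ℝ)/2 := add_le_add hblocks (le_trans htail hsq)
  -- conclude
  have hfinal : |1 / (R:ℝ) * (∑ j ∈ range R, Int.fract (θ + j * α)) - 1/2|
      = 1/(R:ℝ) * |(∑ j ∈ range R, Int.fract (θ + j * α)) - (R:ℝ)/2| := by
    have hsplit2 : 1 / (R:ℝ) * (∑ j ∈ range R, Int.fract (θ + j * α)) - 1/2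
        = 1/(R:ℝ) * ((∑ j ∈ range R, Int.fract (θ + j * α)) - (R:ℝ)/2) := by
      rw [mul_sub]
      congr 1
      field_simp
    rw [hsplit2, abs_mul, abs_of_pos (by positivity : (0:ℝ) < 1/(R:ℝ))]
  rw [hfinal]
  have hNq : (N:ℝ) * q ≤ R := by
    have : N * q ≤ R := by omega
    exact_mod_cast this
  have hb1 : 1/(R:ℝ) * (3 * N + (q:ℝ)/2) < ε := by
    have hq6 : 3 / (q:ℝ) < ε / 2 := by
      rw [div_lt_div_iff₀ hq' two_pos]
      rw [div_lt_iff₀ hε] at hqbig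
      nlinarith
    have hterm1 : 3 * (N:ℝ) / R ≤ 3 / q := by
      rw [div_le_div_iff₀ hR' hq']
      nlinarith
    have hterm2 : (q:ℝ) / (2*R) < ε/2 := by
      rw [div_lt_div_iff₀ (by positivity) two_pos]
      rw [div_lt_iff₀ hε] at hRbig
      nlinarith
    have hexp : 1/(R:ℝ) * (3 * N + (q:ℝ)/2) = 3 * (N:ℝ)/R + (q:ℝ)/(2*R) := by
      field_simp
    rw [hexp]
    calc 3 * (N:ℝ)/R + (q:ℝ)/(2*R) ≤ 3/q + (q:ℝ)/(2*R) := by linarith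
      _ < ε/2 + ε/2 := by linarith
      _ = ε := by ring
  calc 1/(R:ℝ) * |(∑ j ∈ range R, Int.fract (θ + j * α)) - (R:ℝ)/2|
      ≤ 1/(R:ℝ) * (3 * N + (q:ℝ)/2) :=
        mul_le_mul_of_nonneg_left htot (by positivity)
    _ < ε := hb1
end

section
/- Let $N_0,K_0$ be coprime positive integers with $N_0<K_0$ and $K_0$ odd. Then for all integers $k,j$, $\lfloor K_0(2k+1)/(2N_0)\rfloor \ne \lfloor K_0(2j+1)/(2(K_0-N_0))\rfloor$. In particular the sets $\{\lfloor K_0(2k+1)/(2N_0)\rfloor : k\in\mathbb{Z}\}$ and $\{\lfloor K_0(2j+1)/(2(K_0-N_0))\rfloor : j\in\mathbb{Z}\}$ are disjoint. -/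
theorem floor_disjoint_odd_case (N₀ K₀ : ℕ) (hcop : Nat.Coprime N₀ K₀)
    (hN₀ : 0 < N₀) (hlt : N₀ < K₀) (hodd : Odd K₀) :
    (∀ k j : ℤ,
      ⌊(K₀ : ℝ) * (2 * (k : ℝ) + 1) / (2 * N₀)⌋ ≠
        ⌊(K₀ : ℝ) * (2 * (j : ℝ) + 1) / (2 * ((K₀ : ℝ) - N₀))⌋) ∧
    Disjoint
      {m : ℤ | ∃ k : ℤ, m = ⌊(K₀ : ℝ) * (2 * (k : ℝ) + 1) / (2 * N₀)⌋}
      {m : ℤ | ∃ j : ℤ, m = ⌊(K₀ : ℝ) * (2 * (j : ℝ) + 1) / (2 * ((K₀ : ℝ) - N₀))⌋} := by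
  have main : ∀ k j : ℤ,
      ⌊(K₀ : ℝ) * (2 * (k : ℝ) + 1) / (2 * N₀)⌋ ≠
        ⌊(K₀ : ℝ) * (2 * (j : ℝ) + 1) / (2 * ((K₀ : ℝ) - N₀))⌋ := by
    intro k j h
    set a : ℝ := (K₀ : ℝ) * (2 * (k : ℝ) + 1) / (2 * N₀) with ha
    set b : ℝ := (K₀ : ℝ) * (2 * (j : ℝ) + 1) / (2 * ((K₀ : ℝ) - N₀)) with hb
    have hNpos : (0:ℝ) < N₀ := by exact_mod_cast hN₀
    have hKN : (0:ℝ) < (K₀:ℝ) - N₀ := by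
      have : (N₀:ℝ) < K₀ := by exact_mod_cast hlt
      linarith
    have hea : 2 * (N₀:ℝ) * a = (K₀:ℝ) * (2*(k:ℝ)+1) := by
      rw [ha]; field_simp
    have heb : 2 * ((K₀:ℝ) - N₀) * b = (K₀:ℝ) * (2*(j:ℝ)+1) := by
      rw [hb]; field_simp
    set m := ⌊a⌋ with hm
    have hm1 : (m:ℝ) ≤ a := Int.floor_le a
    have hm2 : a < m + 1 := Int.lt_floor_add_one a
    have hm3 : (m:ℝ) ≤ b := by rw [h]; exact Int.floor_le b
    have hm4 : b < m + 1 := by rw [h]; exact Int.lt_floor_add_one b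
    have hKodd : Odd ((K₀:ℤ)) := by exact_mod_cast hodd
    have hm1' : (m:ℝ) < a := by
      rcases lt_or_eq_of_le hm1 with h' | h'
      · exact h'
      · exfalso
        have : 2 * (N₀:ℝ) * (m:ℝ) = (K₀:ℝ) * (2*(k:ℝ)+1) := by rw [h', hea]
        have hz : 2 * (N₀:ℤ) * m = (K₀:ℤ) * (2*k+1) := by exact_mod_cast this
        have hO : Odd ((K₀:ℤ) * (2*k+1)) := hKodd.mul ⟨k, by ring⟩
        have hE : Even (2 * (N₀:ℤ) * m) := ⟨N₀ * m, by ring⟩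
        rw [hz] at hE
        exact (Int.not_odd_iff_even.mpr hE) hO
    have hm3' : (m:ℝ) < b := by
      rcases lt_or_eq_of_le hm3 with h' | h'
      · exact h'
      · exfalso
        have : 2 * ((K₀:ℝ) - N₀) * (m:ℝ) = (K₀:ℝ) * (2*(j:ℝ)+1) := by rw [h', heb]
        have hz : 2 * ((K₀:ℤ) - N₀) * m = (K₀:ℤ) * (2*j+1) := by exact_mod_cast this
        have hO : Odd ((K₀:ℤ) * (2*j+1)) := hKodd.mul ⟨j, by ring⟩
        have hE : Even (2 * ((K₀:ℤ) - N₀) * m) := ⟨((K₀:ℤ) - N₀) * m, by ring⟩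
        rw [hz] at hE
        exact (Int.not_odd_iff_even.mpr hE) hO
    have hsum : 2 * (K₀:ℝ) * ((k:ℝ)+(j:ℝ)+1) = 2 * (N₀:ℝ) * a + 2 * ((K₀:ℝ) - N₀) * b := by
      rw [hea, heb]; ring
    have hlow : 2 * (K₀:ℝ) * (m:ℝ) < 2 * (K₀:ℝ) * ((k:ℝ)+(j:ℝ)+1) := by
      rw [hsum]; nlinarith
    have hhigh : 2 * (K₀:ℝ) * ((k:ℝ)+(j:ℝ)+1) < 2 * (K₀:ℝ) * ((m:ℝ)+1) := by
      rw [hsum]; nlinarith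
    have hKpos : (0:ℝ) < 2 * (K₀:ℝ) := by linarith
    have h1 : (m:ℝ) < (k:ℝ)+(j:ℝ)+1 := lt_of_mul_lt_mul_left (by linarith [hlow]) (le_of_lt hKpos)
    have h2 : (k:ℝ)+(j:ℝ)+1 < (m:ℝ)+1 := lt_of_mul_lt_mul_left (by linarith [hhigh]) (le_of_lt hKpos)
    have h1' : m < k + j + 1 := by exact_mod_cast h1
    have h2' : k + j + 1 < m + 1 := by exact_mod_cast h2
    omega
  refine ⟨main, ?_⟩
  rw [Set.disjoint_left]
  rintro x ⟨k, rfl⟩ ⟨j, hj⟩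
  exact main k j hj
end

section
/- Let $N_0,K_0$ be coprime positive integers with $N_0<K_0$ and $K_0$ even (so $N_0$ is odd). If $\lfloor K_0(2k+1)/(2N_0)\rfloor = \lfloor K_0(2j+1)/(2(K_0-N_0))\rfloor$ for integers $0\le k\le N_0-1$ and $0\le j\le K_0-N_0-1$, then $k=(N_0-1)/2$, $j=(K_0-N_0-1)/2$, and the common value of $K_0(2k+1)/(2N_0)$ and $K_0(2j+1)/(2(K_0-N_0))$ equals $K_0/2$. -/
lemma floor_int_div_nat (a : ℤ) (b : ℕ) : ⌊(a : ℝ) / (b : ℝ)⌋ = a / (b : ℤ) := by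
  rw [show ((a : ℝ) / (b : ℝ)) = (((a / b : ℚ) : ℝ)) by push_cast; ring]
  rw [Rat.floor_cast, Rat.floor_intCast_div_natCast]

theorem floor_coincidence_even_case (N₀ K₀ : ℕ) (hcop : Nat.Coprime N₀ K₀)
    (hN₀ : 0 < N₀) (hlt : N₀ < K₀) (heven : Even K₀)
    (k j : ℤ) (hk0 : 0 ≤ k) (hk1 : k ≤ (N₀ : ℤ) - 1)
    (hj0 : 0 ≤ j) (hj1 : j ≤ (K₀ : ℤ) - (N₀ : ℤ) - 1)
    (heq : ⌊(K₀ : ℝ) * (2 * (k : ℝ) + 1) / (2 * N₀)⌋ =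
      ⌊(K₀ : ℝ) * (2 * (j : ℝ) + 1) / (2 * ((K₀ : ℝ) - N₀))⌋) :
    k = ((N₀ : ℤ) - 1) / 2 ∧ j = ((K₀ : ℤ) - N₀ - 1) / 2 ∧
      (K₀ : ℝ) * (2 * (k : ℝ) + 1) / (2 * N₀) = (K₀ : ℝ) / 2 ∧
      (K₀ : ℝ) * (2 * (j : ℝ) + 1) / (2 * ((K₀ : ℝ) - N₀)) = (K₀ : ℝ) / 2 := by
  have hNZ : (0:ℤ) < (N₀:ℤ) := by exact_mod_cast hN₀
  have hltZ : (N₀:ℤ) < (K₀:ℤ) := by exact_mod_cast hlt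
  have hMZ : (0:ℤ) < (K₀:ℤ) - N₀ := by linarith
  have hKZ : (0:ℤ) < (K₀:ℤ) := by linarith
  -- rewrite the two floors as integer divisions
  have e1 : ⌊(K₀ : ℝ) * (2 * (k : ℝ) + 1) / (2 * N₀)⌋
      = ((K₀:ℤ) * (2*k+1)) / (2*(N₀:ℤ)) := by
    rw [show (K₀ : ℝ) * (2 * (k : ℝ) + 1) / (2 * N₀)
        = (((K₀:ℤ) * (2*k+1) : ℤ) : ℝ) / ((2*N₀ : ℕ) : ℝ) by push_cast; ring]
    rw [floor_int_div_nat]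
    norm_cast
  have e2 : ⌊(K₀ : ℝ) * (2 * (j : ℝ) + 1) / (2 * ((K₀ : ℝ) - N₀))⌋
      = ((K₀:ℤ) * (2*j+1)) / (2*((K₀:ℤ)-N₀)) := by
    rw [show (K₀ : ℝ) * (2 * (j : ℝ) + 1) / (2 * ((K₀ : ℝ) - N₀))
        = (((K₀:ℤ) * (2*j+1) : ℤ) : ℝ) / ((2*(K₀-N₀) : ℕ) : ℝ) by
      push_cast [Nat.cast_sub hlt.le]; ring]
    rw [floor_int_div_nat]
    push_cast [Nat.cast_sub hlt.le]
    ring_nf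
  rw [e1, e2] at heq
  set m : ℤ := ((K₀:ℤ) * (2*k+1)) / (2*(N₀:ℤ)) with hmdef
  have hm1 := Int.mul_ediv_add_emod ((K₀:ℤ) * (2*k+1)) (2*(N₀:ℤ))
  have hm2 := Int.mul_ediv_add_emod ((K₀:ℤ) * (2*j+1)) (2*((K₀:ℤ)-N₀))
  rw [← heq] at hm2
  set r₁ : ℤ := ((K₀:ℤ) * (2*k+1)) % (2*(N₀:ℤ)) with hr1def
  set r₂ : ℤ := ((K₀:ℤ) * (2*j+1)) % (2*((K₀:ℤ)-N₀)) with hr2def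
  have hr1nn : 0 ≤ r₁ := Int.emod_nonneg _ (by positivity)
  have hr2nn : 0 ≤ r₂ := Int.emod_nonneg _ (by positivity)
  have hr1lt : r₁ < 2*(N₀:ℤ) := Int.emod_lt_of_pos _ (by positivity)
  have hr2lt : r₂ < 2*((K₀:ℤ)-N₀) := Int.emod_lt_of_pos _ (by positivity)
  have hsum : r₁ + r₂ = 2*(K₀:ℤ)*(k+j+1-m) := by linear_combination hm1 + hm2
  have ht : k + j + 1 - m = 0 := by nlinarith [hsum, hr1nn, hr2nn, hr1lt, hr2lt, hKZ]
  have hz : r₁ + r₂ = 0 := by rw [hsum, ht, mul_zero]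
  have hr1z : r₁ = 0 := le_antisymm (by linarith) hr1nn
  have hr2z : r₂ = 0 := le_antisymm (by linarith) hr2nn
  -- divisibility
  have hd1 : (2*(N₀:ℤ)) ∣ (K₀:ℤ) * (2*k+1) := Int.dvd_of_emod_eq_zero hr1z
  have hd2 : (2*((K₀:ℤ)-N₀)) ∣ (K₀:ℤ) * (2*j+1) := Int.dvd_of_emod_eq_zero hr2z
  have hcopZ : IsCoprime ((N₀:ℤ)) ((K₀:ℤ)) := Nat.isCoprime_iff_coprime.mpr hcop
  have hcopM : IsCoprime ((K₀:ℤ) - N₀) ((K₀:ℤ)) := by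
    have h2 := (hcopZ.neg_left).add_mul_left_left 1
    rwa [show -(N₀:ℤ) + (K₀:ℤ)*1 = (K₀:ℤ) - N₀ by ring] at h2
  have hdvdk : (N₀:ℤ) ∣ 2*k+1 := by
    refine hcopZ.dvd_of_dvd_mul_left ?_
    exact dvd_trans (dvd_mul_left (N₀:ℤ) 2) hd1
  have hdvdj : ((K₀:ℤ)-N₀) ∣ 2*j+1 := by
    refine hcopM.dvd_of_dvd_mul_left ?_
    exact dvd_trans (dvd_mul_left _ 2) hd2
  obtain ⟨c, hc⟩ := hdvdk
  have hA : (N₀:ℤ)*c < (N₀:ℤ)*2 := by rw [← hc]; linarith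
  have hB : (0:ℤ) < (N₀:ℤ)*c := by rw [← hc]; linarith
  have hcpos : 0 < c := by
    by_contra h
    push_neg at h
    have := mul_le_mul_of_nonneg_left h hNZ.le
    simp only [mul_zero] at this
    linarith
  have hclt : c < 2 := lt_of_mul_lt_mul_left hA hNZ.le
  have hc1 : c = 1 := by omega
  have hkN : 2*k+1 = (N₀:ℤ) := by rw [hc, hc1, mul_one]
  obtain ⟨d, hd⟩ := hdvdj
  have hA' : ((K₀:ℤ)-N₀)*d < ((K₀:ℤ)-N₀)*2 := by rw [← hd]; linarith
  have hB' : (0:ℤ) < ((K₀:ℤ)-N₀)*d := by rw [← hd]; linarith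
  have hdpos : 0 < d := by
    by_contra h
    push_neg at h
    have := mul_le_mul_of_nonneg_left h hMZ.le
    simp only [mul_zero] at this
    linarith
  have hdlt : d < 2 := lt_of_mul_lt_mul_left hA' hMZ.le
  have hd1' : d = 1 := by omega
  have hjM : 2*j+1 = (K₀:ℤ) - N₀ := by rw [hd, hd1', mul_one]
  have hNne : (N₀:ℝ) ≠ 0 := by positivity
  have hMne : ((K₀:ℝ) - N₀) ≠ 0 := by
    have : (N₀:ℝ) < (K₀:ℝ) := by exact_mod_cast hlt
    linarith
  have hkR : 2*(k:ℝ)+1 = (N₀:ℝ) := by exact_mod_cast hkN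
  have hjR : 2*(j:ℝ)+1 = (K₀:ℝ) - N₀ := by exact_mod_cast hjM
  refine ⟨by omega, by omega, ?_, ?_⟩
  · rw [hkR]; field_simp
  · rw [hjR]; field_simp
end

section
/- Let $a,b>0$ with $a+b=1$ and $a$ irrational, and let $K$ be any positive integer. For every $p\in\mathbb{Z}$ and $I=[pK,(p+1)K)$, the number of points of $\mathbb{Z}+1/2$ in $I$ equals the number of points of $(\mathbb{Z}+1/2)/a$ in $I$ plus the number of points of $(\mathbb{Z}+1/2)/b$ in $I$, namely $K$. -/
/-! Half-integers in `[x, y)` are counted by `⌈y - 1/2⌉ - ⌈x - 1/2⌉`, and those of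
`(ℤ + 1/2)/c` by the same expression at `c x, c y`. For integer endpoints the plain count is the
length `K`. Since `b m = m - a m` and `a m - 1/2` is never an integer, reflecting `t ↦ m - t` turns
`⌈a m - 1/2⌉` into `m - ⌈b m - 1/2⌉`, so the two scaled counts add up to the plain one. -/

open Set

theorem ncard_setOf_add_half_mem_Ico {x y : ℝ} (hxy : x ≤ y) :
    ({n : ℤ | (n : ℝ) + 1/2 ∈ Ico x y}.ncard : ℤ) = ⌈y - 1/2⌉ - ⌈x - 1/2⌉ := by
  have hset : {n : ℤ | (n : ℝ) + 1/2 ∈ Ico x y} = Ico ⌈x - 1/2⌉ ⌈y - 1/2⌉ := by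
    ext n
    simp only [mem_ofPred_eq, mem_Ico, Int.ceil_le, Int.lt_ceil, sub_le_iff_le_add,
      lt_sub_iff_add_lt]
  rw [hset, ← Finset.coe_Ico, ncard_coe_finset, Int.card_Ico,
    Int.toNat_of_nonneg (sub_nonneg.2 (Int.ceil_le_ceil (by linarith)))]

theorem setOf_add_half_div_mem_Ico {c : ℝ} (hc : 0 < c) (x y : ℝ) :
    {n : ℤ | ((n : ℝ) + 1/2) / c ∈ Ico x y} = {n : ℤ | (n : ℝ) + 1/2 ∈ Ico (c * x) (c * y)} := by
  ext n
  simp only [mem_ofPred_eq, mem_Ico, le_div_iff₀' hc, div_lt_iff₀' hc]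

theorem ncard_setOf_add_half_div_mem_Ico {c x y : ℝ} (hc : 0 < c) (hxy : x ≤ y) :
    ({n : ℤ | ((n : ℝ) + 1/2) / c ∈ Ico x y}.ncard : ℤ) = ⌈c * y - 1/2⌉ - ⌈c * x - 1/2⌉ := by
  rw [setOf_add_half_div_mem_Ico hc,
    ncard_setOf_add_half_mem_Ico (mul_le_mul_of_nonneg_left hxy hc.le)]

theorem Int.ceil_intCast_sub_half (m : ℤ) : ⌈(m : ℝ) - 1/2⌉ = m := by
  rw [Int.ceil_eq_iff]; constructor <;> linarith

theorem Int.ceil_sub_half_add_ceil_sub_sub_half {R : Type*} [Field R] [LinearOrder R]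
    [IsStrictOrderedRing R] [FloorRing R] {t : R} (ht : t - 1/2 ∉ Set.range ((↑) : ℤ → R)) (m : ℤ) :
    ⌈t - 1/2⌉ + ⌈m - t - 1/2⌉ = m := by
  have hreflect : (m : R) - t - 1/2 = -(t - 1/2) + ((m - 1 : ℤ) : R) := by push_cast; ring
  rw [hreflect, Int.ceil_add_intCast, Int.ceil_neg, (Int.ceil_eq_floor_add_one_iff_notMem _).2 ht]
  ring

theorem Irrational.mul_intCast_sub_half_notMem_range {a : ℝ} (ha : Irrational a) (m : ℤ) :
    a * m - 1/2 ∉ Set.range ((↑) : ℤ → ℝ) := by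
  rintro ⟨k, hk⟩
  rcases eq_or_ne m 0 with rfl | hm
  · have : ((2 * k + 1 : ℤ) : ℝ) = 0 := by push_cast; rw [hk]; ring
    have : 2 * k + 1 = 0 := by exact_mod_cast this
    omega
  · exact (ha.mul_intCast hm).ne_rat (k + 1/2) (by push_cast; linarith)

theorem Irrational.ceil_mul_sub_half_add_ceil_mul_sub_half {a b : ℝ} (ha : Irrational a)
    (hab : a + b = 1) (m : ℤ) : ⌈a * m - 1/2⌉ + ⌈b * m - 1/2⌉ = m := by
  rw [show b * m = m - a * m by linear_combination (m : ℝ) * hab]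
  exact Int.ceil_sub_half_add_ceil_sub_sub_half (ha.mul_intCast_sub_half_notMem_range m) m

theorem local_counting_identity_general (a b : ℝ) (ha : Irrational a) (h0 : 0 < a)
    (hab : a + b = 1) (hb : 0 < b) (K : ℕ) :
    ∀ p : ℤ,
      ({n : ℤ | ((n : ℝ) + 1/2) ∈ Set.Ico ((p : ℝ) * K) (((p : ℝ) + 1) * K)}.ncard =
          {n : ℤ | ((n : ℝ) + 1/2) / a ∈ Set.Ico ((p : ℝ) * K) (((p : ℝ) + 1) * K)}.ncard +
          {n : ℤ | ((n : ℝ) + 1/2) / b ∈ Set.Ico ((p : ℝ) * K) (((p : ℝ) + 1) * K)}.ncard) ∧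
      {n : ℤ | ((n : ℝ) + 1/2) ∈ Set.Ico ((p : ℝ) * K) (((p : ℝ) + 1) * K)}.ncard = K := by
  intro p
  have hx : (p : ℝ) * K = ((p * K : ℤ) : ℝ) := by push_cast; ring
  have hy : ((p : ℝ) + 1) * K = (((p + 1) * K : ℤ) : ℝ) := by push_cast; ring
  have hxy : ((p * K : ℤ) : ℝ) ≤ (((p + 1) * K : ℤ) : ℝ) := by
    rw [← hx, ← hy]; gcongr; linarith
  rw [hx, hy]
  have hplain := ncard_setOf_add_half_mem_Ico hxy
  rw [Int.ceil_intCast_sub_half, Int.ceil_intCast_sub_half] at hplain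
  have hsplit_x := ha.ceil_mul_sub_half_add_ceil_mul_sub_half hab (p * K)
  have hsplit_y := ha.ceil_mul_sub_half_add_ceil_mul_sub_half hab ((p + 1) * K)
  have ha_count := ncard_setOf_add_half_div_mem_Ico h0 hxy
  have hb_count := ncard_setOf_add_half_div_mem_Ico hb hxy
  have hlength : (p + 1) * (K : ℤ) - p * K = K := by ring
  omega

theorem local_counting_identity (a b : ℝ) (ha : Irrational a) (h0 : 0 < a)
    (hab : a + b = 1) (hb : 0 < b) (K : ℕ) (hK : 0 < K) :
    ∀ p : ℤ,
      ({n : ℤ | ((n : ℝ) + 1/2) ∈ Set.Ico ((p : ℝ) * K) (((p : ℝ) + 1) * K)}.ncard =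
          {n : ℤ | ((n : ℝ) + 1/2) / a ∈ Set.Ico ((p : ℝ) * K) (((p : ℝ) + 1) * K)}.ncard +
          {n : ℤ | ((n : ℝ) + 1/2) / b ∈ Set.Ico ((p : ℝ) * K) (((p : ℝ) + 1) * K)}.ncard) ∧
      {n : ℤ | ((n : ℝ) + 1/2) ∈ Set.Ico ((p : ℝ) * K) (((p : ℝ) + 1) * K)}.ncard = K :=
  local_counting_identity_general a b ha h0 hab hb K
end

section
/- Let $a,b>0$ with $a+b=1$, $a$ irrational. Then the rounding map $R(x)=\lfloor x\rfloor + 1/2$ maps the union $(\mathbb{Z}+1/2)/a \cup (\mathbb{Z}+1/2)/b$ bijectively onto $\mathbb{Z}+1/2$. -/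
/-!
Since `⌊h / c⌋ = k` means `h ∈ [k c, (k + 1) c)`, the fibre of the rounding map over `k + 1/2`
consists of the half-integers `h` in `[k a, (k + 1) a)` and in `[k b, (k + 1) b)`. Each interval
has length `< 1`, so contains at most one half-integer. If both contain one, `h + h'` is an
integer in `[k, k + 1)`, so `h + h' = k`, which forces `h = k a`, impossible for irrational `a`.
Conversely the half-integer `h ∈ [k a, k a + 1]` lies either in `[k a, (k + 1) a)` or in
`((k + 1) a, k a + 1]`, and in the second case `k + 1 - h ∈ [k b, (k + 1) b)`.
-/

lemma Irrational.intCast_add_half_ne_intCast_mul {a : ℝ} (ha : Irrational a) (n k : ℤ) :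
    (n : ℝ) + 1/2 ≠ k * a := by
  intro h
  rcases eq_or_ne k 0 with rfl | hk
  · have : ((2 * n + 1 : ℤ) : ℝ) = 0 := by push_cast; linarith
    have : 2 * n + 1 = 0 := by exact_mod_cast this
    omega
  · exact ha.intCast_mul hk ⟨n + 1/2, by push_cast; linarith⟩

lemma Int.floor_div_eq_iff {x c : ℝ} (hc : 0 < c) (k : ℤ) :
    ⌊x / c⌋ = k ↔ k * c ≤ x ∧ x < (k + 1) * c := by
  rw [Int.floor_eq_iff, le_div_iff₀ hc, div_lt_iff₀ hc]

lemma eq_of_floor_add_half_div_eq {c : ℝ} (hc : 0 < c) (hc1 : c ≤ 1) {n n' : ℤ}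
    (h : ⌊((n : ℝ) + 1/2) / c⌋ = ⌊((n' : ℝ) + 1/2) / c⌋) : n = n' := by
  have hdiff : |((n : ℝ) + 1/2) / c - ((n' : ℝ) + 1/2) / c| < 1 :=
    Int.abs_sub_lt_one_of_floor_eq_floor h
  rw [← sub_div, abs_div, abs_of_pos hc, div_lt_one hc, add_sub_add_right_eq_sub] at hdiff
  have : |((n - n' : ℤ) : ℝ)| < 1 := by push_cast; linarith
  rw [← Int.cast_abs, ← Int.cast_one, Int.cast_lt, Int.abs_lt_one_iff] at this
  omega

lemma floor_add_half_div_ne {a b : ℝ} (ha : Irrational a) (h0 : 0 < a) (hb : 0 < b)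
    (hab : a + b = 1) (n n' : ℤ) :
    ⌊((n : ℝ) + 1/2) / a⌋ ≠ ⌊((n' : ℝ) + 1/2) / b⌋ := by
  intro h
  set k := ⌊((n : ℝ) + 1/2) / a⌋
  obtain ⟨hak, hak1⟩ := (Int.floor_div_eq_iff h0 k).mp rfl
  obtain ⟨hbk, hbk1⟩ := (Int.floor_div_eq_iff hb k).mp h.symm
  have hkb : (k : ℝ) * b = k - k * a := by linear_combination (k : ℝ) * hab
  have hkb1 : ((k : ℝ) + 1) * b = k + 1 - (k + 1) * a := by
    linear_combination ((k : ℝ) + 1) * hab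
  have hsum : n + n' + 1 = k := by
    have lo : (k : ℝ) ≤ ((n + n' + 1 : ℤ) : ℝ) := by push_cast; linarith
    have hi : ((n + n' + 1 : ℤ) : ℝ) < ((k + 1 : ℤ) : ℝ) := by push_cast; linarith
    have := Int.cast_le.mp lo
    have := Int.cast_lt.mp hi
    omega
  have hsum' : (n : ℝ) + n' + 1 = k := by exact_mod_cast hsum
  exact ha.intCast_add_half_ne_intCast_mul n k (by linarith)

lemma exists_floor_add_half_div_eq {a b : ℝ} (ha : Irrational a) (h0 : 0 < a) (hb : 0 < b)
    (hab : a + b = 1) (k : ℤ) :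
    ∃ n : ℤ, ⌊((n : ℝ) + 1/2) / a⌋ = k ∨ ⌊((n : ℝ) + 1/2) / b⌋ = k := by
  set n := ⌊(k : ℝ) * a + 1/2⌋
  have hlo : (n : ℝ) ≤ k * a + 1/2 := Int.floor_le _
  have hhi : (k : ℝ) * a + 1/2 < n + 1 := Int.lt_floor_add_one _
  by_cases hn : (n : ℝ) + 1/2 < (k + 1) * a
  · exact ⟨n, Or.inl ((Int.floor_div_eq_iff h0 k).mpr ⟨by linarith, hn⟩)⟩
  · have hne := ha.intCast_add_half_ne_intCast_mul n (k + 1)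
    push_cast at hne
    have hn' : ((k : ℝ) + 1) * a < n + 1/2 := (not_lt.mp hn).lt_of_ne hne.symm
    refine ⟨k - n, Or.inr ((Int.floor_div_eq_iff hb k).mpr ⟨?_, ?_⟩)⟩ <;>
    · push_cast
      rw [show b = 1 - a by linarith]
      linarith

theorem rounding_map_bijective (a b : ℝ) (ha : Irrational a) (h0 : 0 < a)
    (hb : 0 < b) (hab : a + b = 1) :
    Set.BijOn (fun x : ℝ => (⌊x⌋ : ℝ) + 1/2)
      ({x : ℝ | ∃ n : ℤ, x = ((n : ℝ) + 1/2) / a} ∪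
        {x : ℝ | ∃ n : ℤ, x = ((n : ℝ) + 1/2) / b})
      {y : ℝ | ∃ n : ℤ, y = (n : ℝ) + 1/2} := by
  refine ⟨fun x _ => ⟨⌊x⌋, rfl⟩, ?_, ?_⟩
  · rintro x hx y hy hxy
    have hfl : ⌊x⌋ = ⌊y⌋ := by exact_mod_cast add_right_cancel hxy
    rcases hx with ⟨n, rfl⟩ | ⟨n, rfl⟩ <;> rcases hy with ⟨n', rfl⟩ | ⟨n', rfl⟩
    · rw [eq_of_floor_add_half_div_eq h0 (by linarith) hfl]
    · exact (floor_add_half_div_ne ha h0 hb hab n n' hfl).elim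
    · exact (floor_add_half_div_ne ha h0 hb hab n' n hfl.symm).elim
    · rw [eq_of_floor_add_half_div_eq hb (by linarith) hfl]
  · rintro _ ⟨k, rfl⟩
    obtain ⟨n, hn | hn⟩ := exists_floor_add_half_div_eq ha h0 hb hab k
    · exact ⟨_, Or.inl ⟨n, rfl⟩, by simp only [hn]⟩
    · exact ⟨_, Or.inr ⟨n, rfl⟩, by simp only [hn]⟩
end

section
/- Let $0<a<1$ be rational with $a=N_0/K_0$ in lowest terms and $K_0$ even, and $b=1-a$. Then $(\mathbb{Z}+1/2)/a \cap (\mathbb{Z}+1/2)/b = K_0(\mathbb{Z}+1/2)$, i.e., the common points of the two half-integer lattices are exactly the odd multiples of $K_0/2$. -/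
/-!
With `y = x / K₀` the claim becomes `p y ∈ ℤ + 1/2 ∧ q y ∈ ℤ + 1/2 ↔ y ∈ ℤ + 1/2` for
`p = N₀` and `q = K₀ - N₀`, which are odd (as `K₀` is even) and coprime. Odd multiples of a
half-odd integer are half-odd; conversely, from a Bézout relation `u p + v q = 1` we get
`y = u (p y) + v (q y)`, and reducing the relation mod 2 shows `u + v` is odd, so this combination
of two half-odd integers is again half-odd.
-/

def halfOddIntegers : Set ℝ := {x | ∃ n : ℤ, x = n + 1/2}

lemma int_mul_mem_halfOddIntegers {p : ℤ} (hp : Odd p) {x : ℝ} (hx : x ∈ halfOddIntegers) :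
    (p : ℝ) * x ∈ halfOddIntegers := by
  obtain ⟨k, rfl⟩ := hp
  obtain ⟨n, rfl⟩ := hx
  exact ⟨2 * k * n + k + n, by push_cast; ring⟩

lemma int_linear_combination_mem_halfOddIntegers {u v : ℤ} (huv : Odd (u + v)) {x y : ℝ}
    (hx : x ∈ halfOddIntegers) (hy : y ∈ halfOddIntegers) :
    (u : ℝ) * x + v * y ∈ halfOddIntegers := by
  obtain ⟨k, hk⟩ := huv
  obtain ⟨n, rfl⟩ := hx
  obtain ⟨m, rfl⟩ := hy
  have hk' : (u : ℝ) + v = 2 * k + 1 := by exact_mod_cast hk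
  exact ⟨u * n + v * m + k, by push_cast; linear_combination hk' / 2⟩

lemma Int.odd_add_of_mul_add_mul_eq_one {p q u v : ℤ} (hp : Odd p) (hq : Odd q)
    (h : u * p + v * q = 1) : Odd (u + v) := by
  obtain ⟨p', rfl⟩ := hp
  obtain ⟨q', rfl⟩ := hq
  exact ⟨-(u * p' + v * q'), by linear_combination h⟩

theorem mul_mem_halfOddIntegers_iff {p q : ℤ} (hp : Odd p) (hq : Odd q) (hpq : IsCoprime p q)
    (y : ℝ) :
    (p : ℝ) * y ∈ halfOddIntegers ∧ (q : ℝ) * y ∈ halfOddIntegers ↔ y ∈ halfOddIntegers := by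
  refine ⟨fun ⟨hpy, hqy⟩ => ?_, fun hy =>
    ⟨int_mul_mem_halfOddIntegers hp hy, int_mul_mem_halfOddIntegers hq hy⟩⟩
  obtain ⟨u, v, huv⟩ := hpq
  have hy : y = u * (p * y) + v * (q * y) := by
    have huv' : (u : ℝ) * p + v * q = 1 := by exact_mod_cast huv
    linear_combination -y * huv'
  rw [hy]
  exact int_linear_combination_mem_halfOddIntegers
    (Int.odd_add_of_mul_add_mul_eq_one hp hq huv) hpy hqy

lemma setOf_div_halfOddIntegers_eq {c : ℝ} (hc : c ≠ 0) :
    {x : ℝ | ∃ n : ℤ, x = ((n : ℝ) + 1/2) / c} = {x | c * x ∈ halfOddIntegers} := by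
  ext x
  simp only [halfOddIntegers, Set.mem_ofPred_eq, eq_div_iff hc, mul_comm x]

lemma setOf_mul_halfOddIntegers_eq_setOf_div_inv (K : ℝ) :
    {x : ℝ | ∃ n : ℤ, x = K * ((n : ℝ) + 1/2)} = {x | ∃ n : ℤ, x = ((n : ℝ) + 1/2) / K⁻¹} := by
  simp only [div_inv_eq_mul, mul_comm K]

theorem lattice_intersection_even_case_general (N₀ K₀ : ℕ) (hcop : Nat.Coprime N₀ K₀)
    (hlt : N₀ < K₀) (heven : Even K₀)
    (a b : ℝ) (hadef : a = (N₀ : ℝ) / (K₀ : ℝ)) (hbdef : b = 1 - a) :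
    {x : ℝ | ∃ n : ℤ, x = ((n : ℝ) + 1/2) / a} ∩
        {x : ℝ | ∃ n : ℤ, x = ((n : ℝ) + 1/2) / b} =
      {x : ℝ | ∃ n : ℤ, x = (K₀ : ℝ) * ((n : ℝ) + 1/2)} := by
  have hK : (K₀ : ℝ) ≠ 0 := by exact_mod_cast (Nat.zero_le N₀).trans_lt hlt |>.ne'
  have hN : Odd (N₀ : ℤ) := by
    exact_mod_cast (hcop.coprime_dvd_right heven.two_dvd).odd_of_right
  have hM : Odd ((K₀ : ℤ) - N₀) := (by exact_mod_cast heven : Even (K₀ : ℤ)).sub_odd hN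
  have hNM : IsCoprime (N₀ : ℤ) ((K₀ : ℤ) - N₀) := by
    simpa [sub_eq_add_neg] using (Nat.isCoprime_iff_coprime.mpr hcop).add_mul_left_right (-1)
  have hN₀ : (N₀ : ℤ) ≠ 0 := fun h => Int.not_odd_zero (h ▸ hN)
  have hM₀ : (K₀ : ℤ) - N₀ ≠ 0 := fun h => Int.not_odd_zero (h ▸ hM)
  have ha : a = (N₀ : ℤ) * (K₀ : ℝ)⁻¹ := by rw [hadef]; push_cast; ring
  have hb : b = ((K₀ : ℤ) - N₀ : ℤ) * (K₀ : ℝ)⁻¹ := by rw [hbdef, hadef]; push_cast; field_simp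
  rw [setOf_mul_halfOddIntegers_eq_setOf_div_inv, setOf_div_halfOddIntegers_eq (inv_ne_zero hK),
    setOf_div_halfOddIntegers_eq (ha ▸ mul_ne_zero (by exact_mod_cast hN₀) (inv_ne_zero hK)),
    setOf_div_halfOddIntegers_eq (hb ▸ mul_ne_zero (by exact_mod_cast hM₀) (inv_ne_zero hK))]
  ext x
  simpa only [Set.mem_inter_iff, Set.mem_ofPred_eq, ha, hb, mul_assoc] using
    mul_mem_halfOddIntegers_iff hN hM hNM ((K₀ : ℝ)⁻¹ * x)

theorem lattice_intersection_even_case (N₀ K₀ : ℕ) (hcop : Nat.Coprime N₀ K₀)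
    (hN₀ : 0 < N₀) (hlt : N₀ < K₀) (heven : Even K₀)
    (a b : ℝ) (hadef : a = (N₀ : ℝ) / (K₀ : ℝ)) (hbdef : b = 1 - a) :
    {x : ℝ | ∃ n : ℤ, x = ((n : ℝ) + 1/2) / a} ∩
        {x : ℝ | ∃ n : ℤ, x = ((n : ℝ) + 1/2) / b} =
      {x : ℝ | ∃ n : ℤ, x = (K₀ : ℝ) * ((n : ℝ) + 1/2)} :=
  lattice_intersection_even_case_general N₀ K₀ hcop hlt heven a b hadef hbdef
end
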